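/- Let w : ℤ → ℝ satisfy w_n = 2 for n ≥ 0 and the alternating block structure B_n (each block of length 2n with n entries 2 and n entries 1/2 arranged alternately by parity of n) on negative indices, and set n_k := 2k(2k−1) + k. Then for every i ∈ ℤ there exists a constant C_i > 0 such that for all ℓ, k ∈ ℕ: |(|i − n_k| + 1)^ℓ · w_{i−n_k} ⋯ w_{i−1}| ≤ C_i · (|i−n_k|+1)^ℓ / 2^k, and hence (|i−n_k|+1)^ℓ · |w_{i−n_k} ⋯ w_{i−1}| → 0 as k → ∞ for each fixed ℓ. -/

import Mathlib

/-!
Every weight is `2` or `1/2`, so shifting the window `i - N, …, i - 1` by one step changes the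
product `w (i - N) ⋯ w (i - 1)` by a factor between `1/4` and `4`; hence it is at most
`4 ^ |i|` times the window product at `i = 0`. The latter is a product over the negative indices
`-1, …, -N`: each full block `B_n` contributes `2 ^ n · 2 ^ (-n) = 1`, and for `N = n_k` the
window ends `k` entries into the block `B_{2k}`, all equal to `1/2`, leaving `2 ^ (-k)`. The factor
`(|i - n_k| + 1) ^ ℓ` grows only polynomially in `k`, which `2 ^ (-k)` beats.
-/

open Filter Finset Topology

theorem prod_Icc_add_one_sub_mul {M : Type*} [CommMonoid M] (w : ℤ → M) (i : ℤ) (N : ℕ) :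
    (∏ j ∈ Icc 1 N, w (i + 1 - j)) * w (i - N) = (∏ j ∈ Icc 1 N, w (i - j)) * w i := by
  induction N with
  | zero => simp
  | succ N ih =>
    have hshift : i + 1 - ((N + 1 : ℕ) : ℤ) = i - N := by push_cast; ring
    rw [prod_Icc_succ_top (by omega), prod_Icc_succ_top (by omega), hshift, ih, mul_right_comm]

theorem le_pow_natAbs_mul_of_le_mul {f : ℤ → ℝ} {M : ℝ} (hM : 0 ≤ M)
    (hup : ∀ i, f (i + 1) ≤ M * f i) (hdown : ∀ i, f i ≤ M * f (i + 1)) (i : ℤ) :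
    f i ≤ M ^ i.natAbs * f 0 := by
  induction i using Int.induction_on with
  | zero => simp
  | succ n ih =>
    calc f (n + 1) ≤ M * f n := hup n
      _ ≤ M * (M ^ (n : ℤ).natAbs * f 0) := mul_le_mul_of_nonneg_left ih hM
      _ = M ^ ((n : ℤ) + 1).natAbs * f 0 := by
        rw [show ((n : ℤ) + 1).natAbs = n + 1 by omega, Int.natAbs_natCast, pow_succ]; ring
  | pred n ih =>
    calc f (-n - 1) ≤ M * f (-n) := by simpa using hdown (-n - 1)
      _ ≤ M * (M ^ (-(n : ℤ)).natAbs * f 0) := mul_le_mul_of_nonneg_left ih hM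
      _ = M ^ (-(n : ℤ) - 1).natAbs * f 0 := by
        rw [show (-(n : ℤ) - 1).natAbs = n + 1 by omega, Int.natAbs_neg, Int.natAbs_natCast,
          pow_succ]; ring

theorem prod_Icc_sub_le_pow_natAbs_mul {w : ℤ → ℝ} {M : ℝ} (hw : ∀ t, 0 < w t)
    (hM : ∀ s t, w s ≤ M * w t) (i : ℤ) (N : ℕ) :
    ∏ j ∈ Icc 1 N, w (i - j) ≤ M ^ i.natAbs * ∏ j ∈ Icc 1 N, w (0 - j) := by
  have hM0 : 0 ≤ M := by nlinarith [hM 0 0, hw 0]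
  refine le_pow_natAbs_mul_of_le_mul (f := fun i ↦ ∏ j ∈ Icc 1 N, w (i - j)) hM0
    (fun i ↦ ?_) (fun i ↦ ?_) i
  all_goals
    have hshift := prod_Icc_add_one_sub_mul w i N
    have hP : 0 ≤ ∏ j ∈ Icc 1 N, w (i - j) := prod_nonneg fun j _ ↦ (hw _).le
    have hP' : 0 ≤ ∏ j ∈ Icc 1 N, w (i + 1 - j) := prod_nonneg fun j _ ↦ (hw _).le
  · refine le_of_mul_le_mul_right ?_ (hw (i - N))
    rw [hshift, mul_assoc, mul_left_comm]
    exact mul_le_mul_of_nonneg_left (hM _ _) hP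
  · refine le_of_mul_le_mul_right ?_ (hw i)
    rw [mul_assoc, ← hshift, mul_left_comm]
    exact mul_le_mul_of_nonneg_left (hM _ _) hP'

theorem two_zpow_neg_one_pow_eq_or (n : ℕ) :
    (2 : ℝ) ^ ((-1 : ℤ) ^ n) = 2 ∨ (2 : ℝ) ^ ((-1 : ℤ) ^ n) = 2⁻¹ := by
  rcases neg_one_pow_eq_or ℤ n with h | h <;> simp [h]

theorem Nat.exists_mul_pred_lt_le_mul_succ {j : ℕ} (hj : 1 ≤ j) :
    ∃ n, 1 ≤ n ∧ n * (n - 1) < j ∧ j ≤ n * (n + 1) := by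
  induction j, hj using Nat.le_induction with
  | base => exact ⟨1, le_rfl, by norm_num, by norm_num⟩
  | succ j _ ih =>
    obtain ⟨n, hn, hlo, hhi⟩ := ih
    rcases hhi.lt_or_eq with hlt | rfl
    · exact ⟨n, hn, by omega, hlt⟩
    · refine ⟨n + 1, by omega, ?_, ?_⟩
      · simp only [Nat.add_sub_cancel]; nlinarith
      · nlinarith

theorem tendsto_mul_sq_pow_div_two_pow (c : ℝ) (ℓ : ℕ) :
    Tendsto (fun k : ℕ ↦ (c * k ^ 2) ^ ℓ / 2 ^ k) atTop (𝓝 0) := by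
  simpa [mul_pow, ← pow_mul, mul_div_assoc] using
    (tendsto_pow_const_div_const_pow_of_one_lt (2 * ℓ) one_lt_two).const_mul (c ^ ℓ)

theorem abs_sub_add_one_le_mul_sq (i : ℤ) {k : ℕ} (hk : 1 ≤ k) :
    ((|i - (2 * k * (2 * k - 1) + k : ℕ)| : ℤ) + 1 : ℝ) ≤ (|(i : ℝ)| + 5) * k ^ 2 := by
  have hN : ((2 * k * (2 * k - 1) + k : ℕ) : ℤ) ≤ 4 * k ^ 2 := by
    have : 2 * k * (2 * k - 1) + k ≤ 4 * k ^ 2 := by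
      nlinarith [show 2 * k - 1 + 1 = 2 * k by omega]
    exact_mod_cast this
  have hk' : (1 : ℤ) ≤ k := by exact_mod_cast hk
  have hZ : |i - (2 * k * (2 * k - 1) + k : ℕ)| + 1 ≤ (|i| + 5) * (k : ℤ) ^ 2 := by
    nlinarith [abs_sub i ((2 * k * (2 * k - 1) + k : ℕ) : ℤ),
      abs_of_nonneg (Nat.cast_nonneg (α := ℤ) (2 * k * (2 * k - 1) + k)),
      mul_nonneg (abs_nonneg i) (show (0 : ℤ) ≤ k ^ 2 - 1 by nlinarith)]
  exact_mod_cast hZ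

namespace BlockWeight

variable {w : ℤ → ℝ}
  (hpos : ∀ m : ℤ, 0 ≤ m → w m = 2)
  (hblock₁ : ∀ n : ℕ, 1 ≤ n → ∀ j : ℕ, n * (n - 1) < j → j ≤ n * n →
    w (-(j : ℤ)) = (2 : ℝ) ^ ((-1 : ℤ) ^ (n + 1)))
  (hblock₂ : ∀ n : ℕ, 1 ≤ n → ∀ j : ℕ, n * n < j → j ≤ n * (n + 1) →
    w (-(j : ℤ)) = (2 : ℝ) ^ ((-1 : ℤ) ^ n))

include hpos hblock₁ hblock₂ in
theorem eq_two_or_eq_inv_two (t : ℤ) : w t = 2 ∨ w t = 2⁻¹ := by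
  rcases le_or_gt 0 t with ht | ht
  · exact Or.inl (hpos t ht)
  obtain ⟨j, rfl⟩ : ∃ j : ℕ, t = -j := ⟨t.natAbs, by omega⟩
  obtain ⟨n, hn, hlo, hhi⟩ := Nat.exists_mul_pred_lt_le_mul_succ (j := j) (by omega)
  rcases le_or_gt j (n * n) with h | h
  · rw [hblock₁ n hn j hlo h]; exact two_zpow_neg_one_pow_eq_or _
  · rw [hblock₂ n hn j h hhi]; exact two_zpow_neg_one_pow_eq_or _

include hblock₁ hblock₂ in
theorem prod_Ioc_mul_succ_mul_succ_succ (n : ℕ) :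
    ∏ j ∈ Ioc (n * (n + 1)) ((n + 1) * (n + 2)), w (-j) = 1 := by
  have hfirst : ∏ j ∈ Ioc (n * (n + 1)) ((n + 1) * (n + 1)), w (-j)
      = ((2 : ℝ) ^ ((-1 : ℤ) ^ (n + 2))) ^ (n + 1) := by
    rw [prod_eq_pow_card fun j hj ↦ hblock₁ (n + 1) (by omega) j ?_ (mem_Ioc.1 hj).2,
      Nat.card_Ioc]
    · congr 1
      exact Nat.sub_eq_of_eq_add (by ring)
    · simpa [mul_comm] using (mem_Ioc.1 hj).1
  have hsecond : ∏ j ∈ Ioc ((n + 1) * (n + 1)) ((n + 1) * (n + 2)), w (-j)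
      = ((2 : ℝ) ^ ((-1 : ℤ) ^ (n + 1))) ^ (n + 1) := by
    rw [prod_eq_pow_card fun j hj ↦
      hblock₂ (n + 1) (by omega) j (mem_Ioc.1 hj).1 (mem_Ioc.1 hj).2, Nat.card_Ioc]
    congr 1
    exact Nat.sub_eq_of_eq_add (by ring)
  rw [← prod_Ioc_consecutive _ (n := (n + 1) * (n + 1)) (by nlinarith) (by nlinarith), hfirst,
    hsecond, ← mul_pow, ← zpow_add₀ two_ne_zero,
    show (-1 : ℤ) ^ (n + 2) + (-1) ^ (n + 1) = 0 by ring]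
  simp

include hblock₁ hblock₂ in
theorem prod_Ioc_zero_mul_succ (n : ℕ) : ∏ j ∈ Ioc 0 (n * (n + 1)), w (-j) = 1 := by
  induction n with
  | zero => simp
  | succ n ih =>
    rw [← prod_Ioc_consecutive _ (Nat.zero_le (n * (n + 1))) (by nlinarith), ih,
      prod_Ioc_mul_succ_mul_succ_succ hblock₁ hblock₂, one_mul]

include hblock₁ hblock₂ in
theorem prod_Ioc_zero_mul_pred_add {n m : ℕ} (hn : 1 ≤ n) (hm : m ≤ n) :
    ∏ j ∈ Ioc 0 (n * (n - 1) + m), w (-j) = ((2 : ℝ) ^ ((-1 : ℤ) ^ (n + 1))) ^ m := by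
  obtain ⟨n, rfl⟩ : ∃ n', n = n' + 1 := ⟨n - 1, by omega⟩
  rw [Nat.add_sub_cancel, mul_comm (n + 1),
    ← prod_Ioc_consecutive _ (Nat.zero_le (n * (n + 1))) (by omega),
    prod_Ioc_zero_mul_succ hblock₁ hblock₂, one_mul,
    prod_eq_pow_card fun j hj ↦ hblock₁ (n + 1) (by omega) j ?_ ?_, Nat.card_Ioc,
    Nat.add_sub_cancel_left]
  · simpa [mul_comm] using (mem_Ioc.1 hj).1
  · nlinarith [(mem_Ioc.1 hj).2]

include hpos hblock₁ hblock₂ in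
theorem abs_prod_Icc_sub_le (i : ℤ) {k : ℕ} (hk : 1 ≤ k) :
    |∏ j ∈ Icc 1 (2 * k * (2 * k - 1) + k), w (i - (j : ℤ))| ≤ 4 ^ i.natAbs / 2 ^ k := by
  have hw := eq_two_or_eq_inv_two hpos hblock₁ hblock₂
  have hwpos : ∀ t, 0 < w t := fun t ↦ by rcases hw t with h | h <;> rw [h] <;> norm_num
  have hw4 : ∀ s t, w s ≤ 4 * w t := fun s t ↦ by
    rcases hw s with h | h <;> rcases hw t with h' | h' <;> rw [h, h'] <;> norm_num
  have hzero : ∏ j ∈ Icc 1 (2 * k * (2 * k - 1) + k), w (0 - (j : ℤ)) = (2 ^ k)⁻¹ := by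
    simp only [zero_sub, show Icc 1 _ = Ioc 0 _ from Icc_succ_left_eq_Ioc 0 _]
    rw [prod_Ioc_zero_mul_pred_add hblock₁ hblock₂ (by omega) (by omega)]
    simp [Odd.neg_one_pow ⟨k, rfl⟩]
  rw [abs_of_pos (prod_pos fun j _ ↦ hwpos _), div_eq_mul_inv, ← hzero]
  exact prod_Icc_sub_le_pow_natAbs_mul hwpos hw4 i _

end BlockWeight

theorem stmt_19 (w : ℤ → ℝ)
    (hpos : ∀ m : ℤ, 0 ≤ m → w m = 2)
    (hblock₁ : ∀ n : ℕ, 1 ≤ n → ∀ j : ℕ, n * (n - 1) < j → j ≤ n * n →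
      w (-(j : ℤ)) = (2 : ℝ) ^ ((-1 : ℤ) ^ (n + 1)))
    (hblock₂ : ∀ n : ℕ, 1 ≤ n → ∀ j : ℕ, n * n < j → j ≤ n * (n + 1) →
      w (-(j : ℤ)) = (2 : ℝ) ^ ((-1 : ℤ) ^ n)) :
    ∀ i : ℤ, ∃ C > (0 : ℝ),
      (∀ ℓ k : ℕ, 1 ≤ k →
        ((|i - (2 * k * (2 * k - 1) + k : ℕ)| : ℤ) + 1 : ℝ) ^ ℓ *
            |∏ j ∈ Finset.Icc 1 (2 * k * (2 * k - 1) + k) , w (i - (j : ℤ))| ≤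
          C * ((|i - (2 * k * (2 * k - 1) + k : ℕ)| : ℤ) + 1 : ℝ) ^ ℓ / 2 ^ k) ∧
      ∀ ℓ : ℕ, Tendsto (fun k : ℕ =>
          ((|i - (2 * k * (2 * k - 1) + k : ℕ)| : ℤ) + 1 : ℝ) ^ ℓ *
            |∏ j ∈ Finset.Icc 1 (2 * k * (2 * k - 1) + k), w (i - (j : ℤ))|)
        atTop (nhds 0) := by
  intro i
  have hprod := fun k (hk : 1 ≤ k) ↦
    BlockWeight.abs_prod_Icc_sub_le hpos hblock₁ hblock₂ i hk
  refine ⟨4 ^ i.natAbs, by positivity, fun ℓ k hk ↦ ?_, fun ℓ ↦ ?_⟩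
  · rw [mul_comm _ (_ ^ ℓ), mul_div_assoc]
    exact mul_le_mul_of_nonneg_left (hprod k hk) (pow_nonneg (by positivity) ℓ)
  · refine squeeze_zero' (Eventually.of_forall fun k ↦ by positivity)
      ((eventually_ge_atTop 1).mono fun k hk ↦ ?_)
      (by simpa using
        (tendsto_mul_sq_pow_div_two_pow (|(i : ℝ)| + 5) ℓ).const_mul (4 ^ i.natAbs))
    calc _ ≤ ((|(i : ℝ)| + 5) * k ^ 2) ^ ℓ * (4 ^ i.natAbs / 2 ^ k) := by
          gcongr
          · exact abs_sub_add_one_le_mul_sq i hk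
          · exact hprod k hk
      _ = _ := by ring
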